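/- arXiv:2112.04405 — 6 statements merged into one kernel-verified Lean document; each statement's English description precedes it below -/
import Mathlib

section
/- Let q ≥ 1 be an integer and let P = (v_1, …, v_{2q+1}) be a path. Suppose each vertex v_i is assigned a finite list L_{v_i} of colors such that |L_{v_1}| ≥ q+1, |L_{v_{2q+1}}| ≥ q+1, and |L_{v_i}| ≥ 2q+1 for every 2 ≤ i ≤ 2q. Then each vertex v_i of P can be assigned a subset S_i ⊆ L_{v_i} with |S_i| = q such that adjacent vertices of the path receive disjoint sets, i.e., S_i ∩ S_{i+1} = ∅ for all 1 ≤ i ≤ 2q. -/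
/-!
Colour the path `L 0, …, L n` from right to left. Put `C 0 = ∅` and
`C (i + 1) = L i \ C i` (this is `avoid L`).
Consecutive sets `C i`, `C (i + 1)` are disjoint and cover `L i`, so the partial sums
`Σ i := ∑ s ≤ i, #(C s)` grow by at least `2q + 1` every two steps: `i q + ⌈i / 2⌉ ≤ Σ i`.
A `q`-set `S` at vertex `i` is admissible when `#(S ∩ C i) ≤ Σ i - i q`. Every `q`-subset of
`L n` is admissible as soon as `2q ≤ n + 1`. Given an admissible `S (i + 1)`, the set
`L i \ S (i + 1)` contains `C (i + 1) \ S (i + 1)`, which misses `C i` and has at least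
`q - (Σ i - i q)` elements; taking those first and filling up arbitrarily gives an admissible
`S i` disjoint from `S (i + 1)`.
-/

open Finset

theorem Finset.exists_subset_card_eq_and_card_inter_le {α : Type*} [DecidableEq α]
    {T D : Finset α} {q k : ℕ} (hT : q ≤ #T) (hTD : q ≤ #(T \ D) + k) :
    ∃ S ⊆ T, #S = q ∧ #(S ∩ D) ≤ k := by
  obtain ⟨A, hA, hAcard⟩ := exists_subset_card_eq (min_le_right q #(T \ D))
  obtain ⟨S, hAS, hST, hScard⟩ :=
    exists_subsuperset_card_eq (hA.trans sdiff_subset) (hAcard ▸ min_le_left _ _) hT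
  have hSD : S ∩ D ⊆ S \ A := fun x hx => by
    rw [mem_inter] at hx
    exact mem_sdiff.2 ⟨hx.1, fun hxA => (mem_sdiff.1 (hA hxA)).2 hx.2⟩
  refine ⟨S, hST, hScard, ?_⟩
  calc #(S ∩ D) ≤ #(S \ A) := card_le_card hSD
    _ = q - min q #(T \ D) := by rw [card_sdiff_of_subset hAS, hScard, hAcard]
    _ ≤ k := by omega

namespace PathMulticoloring

variable {α : Type*}

def IsMulticoloringOn (L S : ℕ → Finset α) (q m n : ℕ) : Prop :=
  (∀ j, m ≤ j → j ≤ n → S j ⊆ L j ∧ #(S j) = q) ∧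
    ∀ j, m ≤ j → j < n → Disjoint (S j) (S (j + 1))

theorem IsMulticoloringOn.update {L S : ℕ → Finset α} {q m n : ℕ}
    (hS : IsMulticoloringOn L S q (m + 1) n) {T : Finset α} (hTL : T ⊆ L m) (hT : #T = q)
    (hdisj : Disjoint T (S (m + 1))) : IsMulticoloringOn L (Function.update S m T) q m n := by
  constructor
  · intro j hmj hjn
    rcases hmj.eq_or_lt with rfl | hlt
    · simp [hTL, hT]
    · rw [Function.update_of_ne hlt.ne']
      exact hS.1 j hlt hjn
  · intro j hmj hjn
    rcases hmj.eq_or_lt with rfl | hlt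
    · rw [Function.update_self, Function.update_of_ne (by omega)]
      exact hdisj
    · rw [Function.update_of_ne hlt.ne', Function.update_of_ne (by omega)]
      exact hS.2 j hlt hjn

variable [DecidableEq α]

def avoid (L : ℕ → Finset α) : ℕ → Finset α
  | 0 => ∅
  | i + 1 => L i \ avoid L i

def Admissible (L : ℕ → Finset α) (q i : ℕ) (S : Finset α) : Prop :=
  #(S ∩ avoid L i) + i * q ≤ ∑ s ∈ range (i + 1), #(avoid L s)

theorem le_sum_card_avoid {L : ℕ → Finset α} {q n : ℕ} (h0 : q + 1 ≤ #(L 0))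
    (hinner : ∀ i, 0 < i → i < n → 2 * q + 1 ≤ #(L i)) :
    ∀ i ≤ n, i * q + (i + 1) / 2 ≤ ∑ s ∈ range (i + 1), #(avoid L s)
  | 0, _ => by simp
  | 1, _ => by simpa [sum_range_succ, avoid] using h0
  | i + 2, hi => by
    have ih := le_sum_card_avoid h0 hinner i (by omega)
    have hcover : #(L (i + 1)) ≤ #(avoid L (i + 2)) + #(avoid L (i + 1)) :=
      card_le_card_sdiff_add_card
    have hL := hinner (i + 1) (by omega) (by omega)
    rw [sum_range_succ, sum_range_succ]
    have : (i + 2 + 1) / 2 = (i + 1) / 2 + 1 := by omega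
    nlinarith

theorem exists_admissible_of_admissible_succ {L : ℕ → Finset α} {q i : ℕ} {S : Finset α}
    (hS : Admissible L q (i + 1) S) (hsum : i * q ≤ ∑ s ∈ range (i + 1), #(avoid L s))
    (hfree : q ≤ #(L i \ S)) : ∃ T ⊆ L i \ S, #T = q ∧ Admissible L q i T := by
  have hclean : (L i \ S) \ avoid L i = avoid L (i + 1) \ S := sdiff_right_comm _ _ _
  have hsplit := card_sdiff_add_card_inter (avoid L (i + 1)) S
  unfold Admissible at hS ⊢
  rw [sum_range_succ, inter_comm, add_mul, one_mul] at hS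
  obtain ⟨T, hT, hTcard, hTavoid⟩ := exists_subset_card_eq_and_card_inter_le
    (k := ∑ s ∈ range (i + 1), #(avoid L s) - i * q) hfree (by rw [hclean]; omega)
  exact ⟨T, hT, hTcard, by omega⟩

theorem exists_isMulticoloringOn {L : ℕ → Finset α} {q n : ℕ} (hn : 2 * q ≤ n + 1)
    (h0 : q + 1 ≤ #(L 0)) (hinner : ∀ i, 0 < i → i < n → 2 * q + 1 ≤ #(L i))
    (hlast : q ≤ #(L n)) : ∃ S, IsMulticoloringOn L S q 0 n := by
  have hsum := le_sum_card_avoid h0 hinner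
  suffices ∀ m ≤ n, ∃ S, IsMulticoloringOn L S q m n ∧ Admissible L q m (S m) from
    (this 0 n.zero_le).imp fun _ => And.left
  intro m hm
  induction hm using Nat.decreasingInduction with
  | self =>
    obtain ⟨T, hTL, hT⟩ := exists_subset_card_eq hlast
    have hTavoid : #(T ∩ avoid L n) ≤ q := hT ▸ card_le_card inter_subset_left
    refine ⟨fun _ => T, ⟨fun j _ _ => ?_, fun j hj hj' => by omega⟩, ?_⟩
    · obtain rfl : j = n := by omega
      exact ⟨hTL, hT⟩
    · have := hsum n le_rfl
      show #(T ∩ avoid L n) + n * q ≤ _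
      omega
  | of_succ i hi ih =>
    obtain ⟨S, hS, hadm⟩ := ih
    have hfree : q ≤ #(L i \ S (i + 1)) := by
      rcases i.eq_zero_or_pos with rfl | hpos
      · show q ≤ #(L 0 \ S 1)
        have := card_sdiff_add_card_inter (L 0) (S 1)
        simp only [Admissible, avoid, sum_range_succ, range_zero, sum_empty, card_empty,
          sdiff_empty, inter_comm (S 1)] at hadm
        omega
      · have := le_card_sdiff (S (i + 1)) (L i)
        have := (hS.1 (i + 1) le_rfl hi).2
        have := hinner i hpos (by omega)
        omega
    obtain ⟨T, hT, hTcard, hTadm⟩ :=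
      exists_admissible_of_admissible_succ hadm (by have := hsum i hi.le; omega) hfree
    refine ⟨Function.update S i T,
      hS.update (hT.trans sdiff_subset) hTcard (disjoint_of_subset_left hT sdiff_disjoint),
      by simpa using hTadm⟩

end PathMulticoloring

open PathMulticoloring in
theorem path_list_multicoloring_general {α : Type*} (q : ℕ)
    (L : Fin (2 * q + 1) → Finset α)
    (hfirst : q + 1 ≤ (L 0).card)
    (hlast : q + 1 ≤ (L (Fin.last (2 * q))).card)
    (hinner : ∀ i : Fin (2 * q + 1), 1 ≤ (i : ℕ) → (i : ℕ) ≤ 2 * q - 1 →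
      2 * q + 1 ≤ (L i).card) :
    ∃ S : Fin (2 * q + 1) → Finset α,
      (∀ i, S i ⊆ L i ∧ (S i).card = q) ∧
      (∀ i : Fin (2 * q), Disjoint (S i.castSucc) (S i.succ)) := by
  classical
  have hinner' (i : ℕ) (hi : 0 < i) (hi' : i < 2 * q) :
      2 * q + 1 ≤ #(L (Fin.ofNat (2 * q + 1) i)) :=
    hinner _ (by simp [Nat.mod_eq_of_lt (by omega : i < 2 * q + 1)]; omega)
      (by simp [Nat.mod_eq_of_lt (by omega : i < 2 * q + 1)]; omega)
  obtain ⟨S, hS, hdisj⟩ := exists_isMulticoloringOn (L := fun i => L (Fin.ofNat (2 * q + 1) i))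
    (n := 2 * q) (by omega) (by simpa using hfirst) hinner'
    (by simpa [Fin.ofNat, Fin.last] using (q.le_succ).trans hlast)
  refine ⟨fun i => S i, fun i => ?_, fun i => ?_⟩
  · simpa using hS i i.val.zero_le (by omega)
  · simpa using hdisj i i.val.zero_le i.isLt

/-- list coloring of a path `(v_1, …, v_{2q+1})` (0-indexed here as
`Fin (2*q+1)`): if the two endpoints have lists of at least `q+1` colors and all
inner vertices have lists of at least `2q+1` colors, then every vertex can be
assigned a set of exactly `q` colors from its list so that adjacent vertices of
the path receive disjoint sets. -/
theorem path_list_multicoloring {α : Type*} [DecidableEq α] (q : ℕ) (hq : 1 ≤ q)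
    (L : Fin (2 * q + 1) → Finset α)
    (hfirst : q + 1 ≤ (L 0).card)
    (hlast : q + 1 ≤ (L (Fin.last (2 * q))).card)
    (hinner : ∀ i : Fin (2 * q + 1), 1 ≤ (i : ℕ) → (i : ℕ) ≤ 2 * q - 1 →
      2 * q + 1 ≤ (L i).card) :
    ∃ S : Fin (2 * q + 1) → Finset α,
      (∀ i, S i ⊆ L i ∧ (S i).card = q) ∧
      (∀ i : Fin (2 * q), Disjoint (S i.castSucc) (S i.succ)) :=
  path_list_multicoloring_general q L hfirst hlast hinner
end

section
/- Let G be a simple graph on n ≥ 2 vertices that admits a (p:q)-coloring, let 0 < ε < 1, and let p' be an integer with p' > 2·p·ln(n)/(q·ε²). Then G admits a (p' : q')-coloring with q' = ⌈(1−ε)·p'·q/p⌉. -/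
set_option maxHeartbeats 1000000

/-- Key analytic inequality for the Chernoff bound: for `0 ≤ e < 1`,
`e²/2 ≤ e + (1-e)·log(1-e)`. -/
lemma pq_key_ineq {e : ℝ} (h0 : 0 ≤ e) (h1 : e < 1) :
    e ^ 2 / 2 ≤ e + (1 - e) * Real.log (1 - e) := by
  rcases eq_or_lt_of_le h0 with rfl | h0'
  · simp
  set h : ℝ → ℝ := fun t => t + (1 - t) * Real.log (1 - t) - t ^ 2 / 2 with hh
  have hderiv : ∀ t ∈ Set.Ioo (0:ℝ) e, HasDerivAt h (-Real.log (1 - t) - t) t := by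
    intro t ht
    have h1t : (0:ℝ) < 1 - t := by nlinarith [ht.1, ht.2]
    have d1 : HasDerivAt (fun s : ℝ => 1 - s) (-1) t := by
      simpa using (hasDerivAt_id t).const_sub 1
    have d2 : HasDerivAt (fun s : ℝ => Real.log (1 - s)) (-1 / (1 - t)) t :=
      d1.log h1t.ne'
    have d3 : HasDerivAt (fun s : ℝ => (1 - s) * Real.log (1 - s))
        (-1 * Real.log (1 - t) + (1 - t) * (-1 / (1 - t))) t := d1.mul d2
    have d4 : HasDerivAt h
        (1 + (-1 * Real.log (1 - t) + (1 - t) * (-1 / (1 - t))) - 2 * t ^ 1 / 2) t :=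
      ((hasDerivAt_id t).add d3).sub ((hasDerivAt_pow 2 t).div_const 2)
    convert d4 using 1
    field_simp
    ring
  have hmono : MonotoneOn h (Set.Icc 0 e) := by
    apply monotoneOn_of_deriv_nonneg (convex_Icc 0 e)
    · apply ContinuousOn.sub
      · apply ContinuousOn.add continuousOn_id
        apply ContinuousOn.mul (by fun_prop)
        apply ContinuousOn.log (by fun_prop)
        intro t ht
        nlinarith [ht.1, ht.2]
      · fun_prop
    · intro t ht
      rw [interior_Icc] at ht
      exact (hderiv t ht).differentiableAt.differentiableWithinAt
    · intro t ht
      rw [interior_Icc] at ht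
      rw [(hderiv t ht).deriv]
      have h1t : (0:ℝ) < 1 - t := by nlinarith [ht.1, ht.2]
      have := Real.log_le_sub_one_of_pos h1t
      linarith
  have h0e : h 0 ≤ h e := hmono (Set.left_mem_Icc.mpr h0) (Set.right_mem_Icc.mpr h0) h0
  simp only [hh] at h0e
  simp at h0e
  linarith

/-- A `(p:q)`-coloring of `G`: each vertex gets a set of at least `q` colors out of
`p` colors, with adjacent vertices receiving disjoint sets. -/
def HasPQColoring {V : Type*} (G : SimpleGraph V) (p q : ℕ) : Prop :=
  ∃ X : V → Finset (Fin p), (∀ v, q ≤ (X v).card) ∧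
    ∀ ⦃u v⦄, G.Adj u v → Disjoint (X u) (X v)

/-- The probabilistic core: there is a map `f : Fin p' → Fin p` whose preimage of each
`X v` is large. -/
lemma pq_exists_good_map {V : Type*} [Fintype V]
    (n : ℕ) (hn : n = Fintype.card V) (hn2 : 2 ≤ n)
    (p q : ℕ) (hq : 1 ≤ q) (hpq : q ≤ p)
    (X : V → Finset (Fin p)) (hXq : ∀ v, q ≤ (X v).card)
    (ε : ℝ) (hε0 : 0 < ε) (hε1 : ε < 1)
    (p' : ℕ) (hp' : 2 * p * Real.log n / (q * ε ^ 2) < (p' : ℝ)) :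
    ∃ f : Fin p' → Fin p, ∀ v : V,
      ⌈(1 - ε) * (p' : ℝ) * q / p⌉₊ ≤ (Finset.univ.filter fun j => f j ∈ X v).card := by
  classical
  set q' : ℕ := ⌈(1 - ε) * (p' : ℝ) * q / p⌉₊ with hq'def
  have hp0 : 0 < p := hq.trans hpq
  have hp0R : (0:ℝ) < p := by exact_mod_cast hp0
  have hq0R : (0:ℝ) < q := by exact_mod_cast hq
  have hlogn : 0 < Real.log n := Real.log_pos (by exact_mod_cast hn2)
  have hp'0 : 0 < p' := by
    by_contra hc
    push_neg at hc
    interval_cases p'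
    have : (0:ℝ) < 2 * p * Real.log n / (q * ε ^ 2) := by positivity
    simp at hp'
    linarith
  have hp'0R : (0:ℝ) < p' := by exact_mod_cast hp'0
  have h1ε0 : (0:ℝ) < 1 - ε := by linarith
  set x : ℝ := (p' : ℝ) * q / p with hxdef
  have hx0 : 0 < x := by positivity
  have hlog : Real.log n < x * ε ^ 2 / 2 := by
    rw [div_lt_iff₀ (by positivity)] at hp'
    rw [lt_div_iff₀ (by norm_num : (0:ℝ) < 2), hxdef, div_mul_eq_mul_div,
      lt_div_iff₀ hp0R]
    nlinarith
  have hval0 : 0 < (1 - ε) * (p' : ℝ) * q / p := by positivity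
  have hq'1 : 1 ≤ q' := Nat.one_le_iff_ne_zero.mpr (by
    simp only [hq'def, ne_eq, Nat.ceil_eq_zero, not_le]
    exact hval0)
  have hq'le : ((q' : ℝ) - 1) ≤ (1 - ε) * x := by
    have h2 : (q' : ℝ) < (1 - ε) * (p' : ℝ) * q / p + 1 := by
      rw [hq'def]; exact_mod_cast Nat.ceil_lt_add_one hval0.le
    have hxeq : (1 - ε) * (p' : ℝ) * q / p = (1 - ε) * x := by rw [hxdef]; ring
    rw [hxeq] at h2
    linarith
  by_contra hcon
  push_neg at hcon
  set Bad : V → Finset (Fin p' → Fin p) := fun v =>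
    Finset.univ.filter fun f => (Finset.univ.filter fun j => f j ∈ X v).card < q' with hBad
  have hcover : (Finset.univ : Finset (Fin p' → Fin p)) ⊆ Finset.univ.biUnion Bad := by
    intro f _
    obtain ⟨v, hv⟩ := hcon f
    exact Finset.mem_biUnion.mpr ⟨v, Finset.mem_univ v, by simp [hBad, hv]⟩
  have hcount : (p ^ p' : ℕ) ≤ ∑ v : V, (Bad v).card := by
    calc (p ^ p' : ℕ) = (Finset.univ : Finset (Fin p' → Fin p)).card := by
          simp [Finset.card_univ]
    _ ≤ (Finset.univ.biUnion Bad).card := Finset.card_le_card hcover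
    _ ≤ ∑ v : V, (Bad v).card := Finset.card_biUnion_le
  have hperv : ∀ v : V, ((Bad v).card : ℝ) * (1 - ε) ^ (q' - 1) ≤ ((p : ℝ) - ε * q) ^ p' := by
    intro v
    set w : Fin p → ℝ := fun i => if i ∈ X v then (1 - ε) else 1 with hw
    have hwsum : ∑ i, w i = (p : ℝ) - ε * (X v).card := by
      have hpt : ∀ i : Fin p, w i = 1 - (if i ∈ X v then ε else 0) := by
        intro i; simp only [hw]; split_ifs <;> ring
      simp_rw [hpt]
      rw [Finset.sum_sub_distrib, Finset.sum_ite_mem, Finset.univ_inter,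
        Finset.sum_const, Finset.sum_const]
      simp [mul_comm]
    have hprodpow : ∀ f : Fin p' → Fin p,
        ∏ j, w (f j) = (1 - ε) ^ (Finset.univ.filter fun j => f j ∈ X v).card := by
      intro f
      simp only [hw]
      rw [Finset.prod_ite, Finset.prod_const, Finset.prod_const, one_pow, mul_one]
    have hlower : ((Bad v).card : ℝ) * (1 - ε) ^ (q' - 1) ≤
        ∑ f : Fin p' → Fin p, ∏ j, w (f j) :=
      calc ((Bad v).card : ℝ) * (1 - ε) ^ (q' - 1)
          = ∑ _f ∈ Bad v, (1 - ε) ^ (q' - 1) := by rw [Finset.sum_const, nsmul_eq_mul]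
        _ ≤ ∑ f ∈ Bad v, (1 - ε) ^ (Finset.univ.filter fun j => f j ∈ X v).card := by
            apply Finset.sum_le_sum
            intro f hf
            apply pow_le_pow_of_le_one h1ε0.le (by linarith)
            have := (Finset.mem_filter.mp hf).2
            omega
        _ ≤ ∑ f : Fin p' → Fin p, (1 - ε) ^ (Finset.univ.filter fun j => f j ∈ X v).card :=
            Finset.sum_le_sum_of_subset_of_nonneg (Finset.subset_univ _)
              (fun f _ _ => by positivity)
        _ = ∑ f : Fin p' → Fin p, ∏ j, w (f j) :=
            Finset.sum_congr rfl fun f _ => (hprodpow f).symm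
    have hsum : ∑ f : Fin p' → Fin p, ∏ j, w (f j) = ((p : ℝ) - ε * (X v).card) ^ p' := by
      rw [← Fintype.sum_pow w p', hwsum]
    have hub : ((p : ℝ) - ε * (X v).card) ^ p' ≤ ((p : ℝ) - ε * q) ^ p' := by
      apply pow_le_pow_left₀
      · have hc : ((X v).card : ℝ) ≤ p := by
          have := Finset.card_le_card (Finset.subset_univ (X v))
          simp only [Finset.card_univ, Fintype.card_fin] at this
          exact_mod_cast this
        nlinarith
      · have : (q:ℝ) ≤ (X v).card := by exact_mod_cast hXq v
        nlinarith
    linarith [hsum ▸ hlower]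
  have hA : (0:ℝ) < (1 - ε) ^ (q' - 1) := by positivity
  have htot : ((p:ℝ)) ^ p' * (1 - ε) ^ (q' - 1) ≤ (n:ℝ) * ((p:ℝ) - ε * q) ^ p' := by
    calc ((p:ℝ)) ^ p' * (1 - ε) ^ (q' - 1)
        ≤ (∑ v : V, ((Bad v).card : ℝ)) * (1 - ε) ^ (q' - 1) := by
          apply mul_le_mul_of_nonneg_right _ hA.le
          exact_mod_cast hcount
      _ = ∑ v : V, ((Bad v).card : ℝ) * (1 - ε) ^ (q' - 1) := Finset.sum_mul _ _ _
      _ ≤ ∑ _v : V, ((p:ℝ) - ε * q) ^ p' := Finset.sum_le_sum fun v _ => hperv v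
      _ = (n:ℝ) * ((p:ℝ) - ε * q) ^ p' := by
          rw [Finset.sum_const, nsmul_eq_mul, Finset.card_univ, hn]
  have hlogneg : Real.log (1 - ε) < 0 := Real.log_neg h1ε0 (by linarith)
  have hs1 : ((p:ℝ) - ε * q) ^ p' ≤ (p:ℝ) ^ p' * Real.exp (-(ε * x)) := by
    have h1 : (p:ℝ) - ε * q ≤ (p:ℝ) * Real.exp (-(ε * q / p)) := by
      have := Real.add_one_le_exp (-(ε * q / p))
      have h2 : (p:ℝ) * (-(ε * q / p) + 1) ≤ (p:ℝ) * Real.exp (-(ε * q / p)) :=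
        mul_le_mul_of_nonneg_left this hp0R.le
      calc (p:ℝ) - ε * q = (p:ℝ) * (-(ε * q / p) + 1) := by field_simp; ring
        _ ≤ _ := h2
    calc ((p:ℝ) - ε * q) ^ p' ≤ ((p:ℝ) * Real.exp (-(ε * q / p))) ^ p' := by
          apply pow_le_pow_left₀ _ h1
          have : ε * q ≤ (p:ℝ) := by
            have : (q:ℝ) ≤ p := by exact_mod_cast hpq
            nlinarith
          linarith
      _ = (p:ℝ) ^ p' * Real.exp (-(ε * q / p)) ^ p' := mul_pow _ _ _
      _ = (p:ℝ) ^ p' * Real.exp (-(ε * x)) := by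
          rw [← Real.exp_nat_mul]
          congr 1
          rw [hxdef]
          ring
  have hs2 : Real.exp ((1 - ε) * x * Real.log (1 - ε)) ≤ (1 - ε) ^ (q' - 1) := by
    have heq : (1 - ε) ^ (q' - 1) = Real.exp (((q' - 1 : ℕ) : ℝ) * Real.log (1 - ε)) := by
      rw [Real.exp_nat_mul, Real.exp_log h1ε0]
    rw [heq]
    apply Real.exp_le_exp.mpr
    have hcast : ((q' - 1 : ℕ) : ℝ) = (q' : ℝ) - 1 := by
      rw [Nat.cast_sub hq'1]; norm_num
    rw [hcast]
    nlinarith [hq'le]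
  have hs3 : (n:ℝ) * Real.exp (-(ε * x)) < Real.exp ((1 - ε) * x * Real.log (1 - ε)) := by
    have hn0 : (0:ℝ) < n := by positivity
    rw [← Real.exp_log hn0, ← Real.exp_add]
    apply Real.exp_lt_exp.mpr
    have hkey := pq_key_ineq hε0.le hε1
    nlinarith [hkey, hx0, hlog]
  have hfin : (n:ℝ) * ((p:ℝ) - ε * q) ^ p' < ((p:ℝ)) ^ p' * (1 - ε) ^ (q' - 1) := by
    have hppos : (0:ℝ) < (p:ℝ) ^ p' := by positivity
    calc (n:ℝ) * ((p:ℝ) - ε * q) ^ p' ≤ (n:ℝ) * ((p:ℝ) ^ p' * Real.exp (-(ε * x))) :=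
          mul_le_mul_of_nonneg_left hs1 (by positivity)
      _ = (p:ℝ) ^ p' * ((n:ℝ) * Real.exp (-(ε * x))) := by ring
      _ < (p:ℝ) ^ p' * Real.exp ((1 - ε) * x * Real.log (1 - ε)) :=
          mul_lt_mul_of_pos_left hs3 hppos
      _ ≤ (p:ℝ) ^ p' * (1 - ε) ^ (q' - 1) := mul_le_mul_of_nonneg_left hs2 hppos.le
  linarith

/-- if `G` on `n ≥ 2` vertices admits a `(p:q)`-coloring, `0 < ε < 1`,
and `p' > 2·p·ln n/(q·ε²)`, then `G` admits a `(p' : ⌈(1-ε)·p'·q/p⌉)`-coloring. -/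
theorem pq_coloring_resample {V : Type*} [Fintype V] (G : SimpleGraph V)
    (n : ℕ) (hn : n = Fintype.card V) (hn2 : 2 ≤ n)
    (p q : ℕ) (hq : 1 ≤ q) (hpq : q ≤ p) (hcol : HasPQColoring G p q)
    (ε : ℝ) (hε0 : 0 < ε) (hε1 : ε < 1)
    (p' : ℕ) (hp' : 2 * p * Real.log n / (q * ε ^ 2) < (p' : ℝ)) :
    HasPQColoring G p' ⌈(1 - ε) * (p' : ℝ) * q / p⌉₊ := by
  classical
  obtain ⟨X, hXq, hXd⟩ := hcol
  obtain ⟨f, hf⟩ := pq_exists_good_map n hn hn2 p q hq hpq X hXq ε hε0 hε1 p' hp'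
  refine ⟨fun v => Finset.univ.filter fun j => f j ∈ X v, hf, fun u v huv => ?_⟩
  rw [Finset.disjoint_left]
  intro j hju hjv
  have h1 : f j ∈ X u := (Finset.mem_filter.mp hju).2
  have h2 : f j ∈ X v := (Finset.mem_filter.mp hjv).2
  exact (Finset.disjoint_left.mp (hXd huv)) h1 h2
end

section
/- Let G be a simple graph with m edges, let k ≥ 1 be an integer, and let H be the (2k)-subdivision of G. Then every independent set of H has size at most α(G) + m·k, where α(G) denotes the maximum size of an independent set of G. -/
/-! The inner nodes of an edge form a path on `2k` vertices, so an independent set `T` of the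
subdivision contains at most `k` of them, and at most `k - 1` if both ends of the edge lie in `T`.
Let `S` be the set of original vertices in `T` and `B` the set of edges with both ends in `S`.
Deleting one end of every edge of `B` from `S` leaves an independent set of `G`, so
`|S| ≤ α + |B|`, and summing over the edges gives `|T| ≤ α + |B| + (m k - |B|)`. -/

/-- A set of vertices is independent if no two of its elements are adjacent. -/
def IsIndepSet {V : Type*} (G : SimpleGraph V) (S : Set V) : Prop :=
  ∀ u ∈ S, ∀ w ∈ S, ¬ G.Adj u w

/-- `H` is the `(2k)`-subdivision of `G`: every edge `e = {u,v}` of `G` is replaced by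
a path `(u, w^e_1, …, w^e_{2k}, v)` with `2k` new inner vertices, distinct inner
vertices for distinct edges. -/
structure IsSubdivision2k {V W : Type*} (G : SimpleGraph V) (k : ℕ) (H : SimpleGraph W) where
  /-- images of the original vertices -/
  vmap : V → W
  /-- the inner path nodes of each edge -/
  inner : G.edgeSet → Fin (2 * k) → W
  /-- a choice of the two endpoints of each edge -/
  ends : G.edgeSet → V × V
  ends_eq : ∀ e : G.edgeSet, (e : Sym2 V) = s((ends e).1, (ends e).2)
  vmap_inj : Function.Injective vmap
  inner_inj : Function.Injective fun pr : G.edgeSet × Fin (2 * k) => inner pr.1 pr.2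
  vmap_ne_inner : ∀ (a : V) (e : G.edgeSet) (i : Fin (2 * k)), vmap a ≠ inner e i
  cover : ∀ w : W, (∃ a : V, w = vmap a) ∨ ∃ (e : G.edgeSet) (i : Fin (2 * k)), w = inner e i
  adj_iff : ∀ x y : W, H.Adj x y ↔
    (∃ (e : G.edgeSet) (i j : Fin (2 * k)), (i : ℕ) + 1 = (j : ℕ) ∧
        ((x = inner e i ∧ y = inner e j) ∨ (x = inner e j ∧ y = inner e i))) ∨
    (∃ (e : G.edgeSet) (i : Fin (2 * k)), (i : ℕ) = 0 ∧
        ((x = vmap (ends e).1 ∧ y = inner e i) ∨ (y = vmap (ends e).1 ∧ x = inner e i))) ∨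
    (∃ (e : G.edgeSet) (i : Fin (2 * k)), (i : ℕ) = 2 * k - 1 ∧
        ((x = vmap (ends e).2 ∧ y = inner e i) ∨ (y = vmap (ends e).2 ∧ x = inner e i)))

namespace Fin

theorem ncard_le_of_no_consecutive {n : ℕ} {A : Set (Fin n)}
    (hA : ∀ i ∈ A, ∀ j ∈ A, (i : ℕ) + 1 ≠ j) : A.ncard ≤ (n + 1) / 2 := by
  have h := Set.ncard_le_ncard_of_injOn (fun i : Fin n => (i : ℕ) / 2)
    (t := Set.Iio ((n + 1) / 2)) (fun i _ => by simp only [Set.mem_Iio]; omega)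
    (fun i hi j hj hij => by
      have := hA i hi j hj; have := hA j hj i hi
      simp only at hij; ext; omega) (Set.finite_Iio _)
  simpa using h

theorem ncard_le_of_no_consecutive_of_interior {n : ℕ} {A : Set (Fin n)}
    (hA : ∀ i ∈ A, ∀ j ∈ A, (i : ℕ) + 1 ≠ j) (h0 : ∀ i ∈ A, (i : ℕ) ≠ 0)
    (hlast : ∀ i ∈ A, (i : ℕ) ≠ n - 1) : A.ncard ≤ (n - 1) / 2 := by
  have h := Set.ncard_le_ncard_of_injOn (fun i : Fin n => ((i : ℕ) - 1) / 2)
    (t := Set.Iio ((n - 1) / 2))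
    (fun i hi => by have := h0 i hi; have := hlast i hi; simp only [Set.mem_Iio]; omega)
    (fun i hi j hj hij => by
      have := hA i hi j hj; have := hA j hj i hi; have := h0 i hi; have := h0 j hj
      simp only at hij; ext; omega) (Set.finite_Iio _)
  simpa using h

end Fin

/-- Deleting one end of every edge inside `S` leaves an independent set. -/
theorem ncard_le_add_ncard_edges_inside {V : Type*} [Finite V] (G : SimpleGraph V) {α : ℕ}
    (hα : ∀ I, IsIndepSet G I → I.ncard ≤ α) (S : Set V) :
    S.ncard ≤ α + {e : G.edgeSet | ∀ v ∈ (e : Sym2 V), v ∈ S}.ncard := by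
  set B := {e : G.edgeSet | ∀ v ∈ (e : Sym2 V), v ∈ S}
  set D := (fun e : G.edgeSet => (e : Sym2 V).out.1) '' B
  have hindep : IsIndepSet G (S \ D) := by
    intro u hu w hw huw
    obtain ⟨huS, huD⟩ := hu
    obtain ⟨hwS, hwD⟩ := hw
    have hB : (⟨s(u, w), huw⟩ : G.edgeSet) ∈ B := by
      rintro v hv
      rcases Sym2.mem_iff.1 hv with rfl | rfl <;> assumption
    have hD : (s(u, w)).out.1 ∈ D := ⟨_, hB, rfl⟩
    rcases Sym2.mem_iff.1 (Sym2.out_fst_mem s(u, w)) with h | h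
    · exact huD (h ▸ hD)
    · exact hwD (h ▸ hD)
  calc S.ncard ≤ (S \ D).ncard + D.ncard := Set.ncard_le_ncard_sdiff_add_ncard S D
    _ ≤ α + B.ncard := add_le_add (hα _ hindep) (Set.ncard_image_le (Set.toFinite B))

namespace IsSubdivision2k

variable {V W : Type*} {G : SimpleGraph V} {k : ℕ} {H : SimpleGraph W}
  (sub : IsSubdivision2k G k H)

theorem adj_inner_inner {e : G.edgeSet} {i j : Fin (2 * k)} (hij : (i : ℕ) + 1 = j) :
    H.Adj (sub.inner e i) (sub.inner e j) :=
  (sub.adj_iff _ _).2 <| .inl ⟨e, i, j, hij, .inl ⟨rfl, rfl⟩⟩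

theorem adj_fst_inner {e : G.edgeSet} {i : Fin (2 * k)} (hi : (i : ℕ) = 0) :
    H.Adj (sub.vmap (sub.ends e).1) (sub.inner e i) :=
  (sub.adj_iff _ _).2 <| .inr <| .inl ⟨e, i, hi, .inl ⟨rfl, rfl⟩⟩

theorem adj_snd_inner {e : G.edgeSet} {i : Fin (2 * k)} (hi : (i : ℕ) = 2 * k - 1) :
    H.Adj (sub.vmap (sub.ends e).2) (sub.inner e i) :=
  (sub.adj_iff _ _).2 <| .inr <| .inr ⟨e, i, hi, .inl ⟨rfl, rfl⟩⟩

noncomputable def vertexEquiv : V ⊕ (G.edgeSet × Fin (2 * k)) ≃ W :=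
  Equiv.ofBijective (Sum.elim sub.vmap fun p => sub.inner p.1 p.2) <| by
    refine ⟨?_, fun w => ?_⟩
    · rintro (a | p) (b | q) h
      · exact congrArg _ (sub.vmap_inj h)
      · exact absurd h (sub.vmap_ne_inner _ _ _)
      · exact absurd h.symm (sub.vmap_ne_inner _ _ _)
      · exact congrArg _ (sub.inner_inj h)
    · rcases sub.cover w with ⟨a, rfl⟩ | ⟨e, i, rfl⟩
      exacts [⟨.inl a, rfl⟩, ⟨.inr (e, i), rfl⟩]

theorem ncard_eq_add_sum [Finite V] [Fintype G.edgeSet] (T : Set W) :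
    T.ncard = (sub.vmap ⁻¹' T).ncard + ∑ e : G.edgeSet, (sub.inner e ⁻¹' T).ncard := by
  calc T.ncard = Nat.card {x // sub.vertexEquiv x ∈ T} :=
        (Nat.card_congr (sub.vertexEquiv.subtypeEquiv fun _ => Iff.rfl)).symm
    _ = Nat.card {a // sub.vmap a ∈ T} +
          Nat.card {p : G.edgeSet × Fin (2 * k) // sub.inner p.1 p.2 ∈ T} := by
        rw [Nat.card_congr Equiv.subtypeSum, Nat.card_sum]; rfl
    _ = _ := by
        rw [Nat.card_congr (Equiv.subtypeProdEquivSigmaSubtype fun e i => sub.inner e i ∈ T),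
          Nat.card_sigma]
        rfl

variable {sub} {T : Set W}

theorem ncard_inner_preimage_le (hT : IsIndepSet H T) (e : G.edgeSet) :
    (sub.inner e ⁻¹' T).ncard ≤ k := by
  have h := Fin.ncard_le_of_no_consecutive (A := sub.inner e ⁻¹' T) fun i hi j hj hij =>
    hT _ hi _ hj (sub.adj_inner_inner (e := e) hij)
  omega

theorem ncard_inner_preimage_le_of_ends_mem (hT : IsIndepSet H T) {e : G.edgeSet}
    (h₁ : sub.vmap (sub.ends e).1 ∈ T) (h₂ : sub.vmap (sub.ends e).2 ∈ T) :
    (sub.inner e ⁻¹' T).ncard ≤ k - 1 := by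
  have h := Fin.ncard_le_of_no_consecutive_of_interior (A := sub.inner e ⁻¹' T)
    (fun i hi j hj hij => hT _ hi _ hj (sub.adj_inner_inner (e := e) hij))
    (fun i hi h0 => hT _ h₁ _ hi (sub.adj_fst_inner h0))
    (fun i hi hlast => hT _ h₂ _ hi (sub.adj_snd_inner hlast))
  omega

theorem ncard_inner_preimage_add_ite_le (hk : 1 ≤ k) (hT : IsIndepSet H T) (e : G.edgeSet)
    [Decidable (∀ v ∈ (e : Sym2 V), sub.vmap v ∈ T)] :
    (sub.inner e ⁻¹' T).ncard + (if ∀ v ∈ (e : Sym2 V), sub.vmap v ∈ T then 1 else 0) ≤ k := by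
  split_ifs with he
  · have := ncard_inner_preimage_le_of_ends_mem hT
      (he _ ((sub.ends_eq e).symm ▸ Sym2.mem_mk_left _ _))
      (he _ ((sub.ends_eq e).symm ▸ Sym2.mem_mk_right _ _))
    omega
  · exact ncard_inner_preimage_le hT e

end IsSubdivision2k

theorem indep_subdivision_le_general {V W : Type*} [Fintype V]
    (G : SimpleGraph V) (k : ℕ) (hk : 1 ≤ k) (H : SimpleGraph W)
    (sub : IsSubdivision2k G k H)
    (m : ℕ) (hm : m = Nat.card G.edgeSet)
    (α : ℕ) (hα : IsGreatest {a : ℕ | ∃ S : Set V, IsIndepSet G S ∧ S.ncard = a} α)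
    (T : Set W) (hT : IsIndepSet H T) :
    T.ncard ≤ α + m * k := by
  classical
  set B := {e : G.edgeSet | ∀ v ∈ (e : Sym2 V), sub.vmap v ∈ T}
  have hB : B.ncard = ∑ e : G.edgeSet, if e ∈ B then 1 else 0 := by
    rw [Set.ncard_eq_toFinset_card', Set.toFinset_ofPred, Finset.card_filter]; rfl
  have hS : (sub.vmap ⁻¹' T).ncard ≤ α + B.ncard :=
    ncard_le_add_ncard_edges_inside G (fun I hI => hα.2 ⟨I, hI, rfl⟩) _
  calc T.ncard = (sub.vmap ⁻¹' T).ncard + ∑ e : G.edgeSet, (sub.inner e ⁻¹' T).ncard :=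
        sub.ncard_eq_add_sum T
    _ ≤ α + ∑ e : G.edgeSet, ((sub.inner e ⁻¹' T).ncard + if e ∈ B then 1 else 0) := by
        rw [Finset.sum_add_distrib]; omega
    _ ≤ α + ∑ _e : G.edgeSet, k := by
        gcongr with e; exact IsSubdivision2k.ncard_inner_preimage_add_ite_le (sub := sub) hk hT e
    _ = α + m * k := by simp [hm, Nat.card_eq_fintype_card, mul_comm]

/-- every independent set of the `(2k)`-subdivision `H` of a graph `G`
with `m` edges has size at most `α(G) + m·k`, where `α(G)` is the maximum size of an
independent set of `G`. -/
theorem indep_subdivision_le {V W : Type*} [Fintype V] [Fintype W]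
    (G : SimpleGraph V) (k : ℕ) (hk : 1 ≤ k) (H : SimpleGraph W)
    (sub : IsSubdivision2k G k H)
    (m : ℕ) (hm : m = Nat.card G.edgeSet)
    (α : ℕ) (hα : IsGreatest {a : ℕ | ∃ S : Set V, IsIndepSet G S ∧ S.ncard = a} α)
    (T : Set W) (hT : IsIndepSet H T) :
    T.ncard ≤ α + m * k :=
  indep_subdivision_le_general G k hk H sub m hm α hα T hT
end

section
/- Let G be a finite simple graph with at least one vertex and let c ≥ 1 be a real number. Then the following are equivalent: (1) there exists an assignment of weights λ_I ∈ [0,1] to the independent sets I of G such that the total weight of all independent sets is at most c and for every vertex v the total weight of the independent sets containing v is at least 1; (2) there exist integers p ≥ q ≥ 1 such that G admits a (p:q)-coloring with p ≤ c·q. -/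
/-!
A `(p:q)`-coloring is the same as a list of `p` independent sets covering every vertex at least
`q` times. So `(2) → (1)` weights each independent set by its multiplicity in the list divided by
`q`, capped at `1`; and `(1) → (2)` reduces to finding *rational* weights of total at most `c`,
since clearing denominators turns them into multiplicities. Real weights together with a
variable `t := c` bounding their total satisfy a finite system of linear inequalities with
rational coefficients. Fourier–Motzkin elimination of the weights leaves inequalities in `t`
alone, whose least solution is rational and at most `c`; back-substitution, which works over any
ordered field, then produces rational weights.
-/

open Finset Function

lemma exists_forall_le_forall_ge {K α β : Type*} [LinearOrder K] [Nonempty K] [Finite α]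
    [Finite β] (f : α → K) (g : β → K) (h : ∀ a b, f a ≤ g b) :
    ∃ t, (∀ a, f a ≤ t) ∧ ∀ b, t ≤ g b := by
  rcases isEmpty_or_nonempty α with hα | hα
  · rcases isEmpty_or_nonempty β with hβ | hβ
    · exact ⟨Classical.arbitrary K, isEmptyElim, isEmptyElim⟩
    · obtain ⟨b₀, hb₀⟩ := Finite.exists_min g
      exact ⟨g b₀, isEmptyElim, hb₀⟩
  · obtain ⟨a₀, ha₀⟩ := Finite.exists_max f
    exact ⟨f a₀, ha₀, h a₀⟩

lemma exists_rat_le_of_forall_le_mul {σ : Type*} [Finite σ] (a b : σ → ℚ) {t : ℝ}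
    (ht : ∀ k, (b k : ℝ) ≤ a k * t) : ∃ s : ℚ, (s : ℝ) ≤ t ∧ ∀ k, b k ≤ a k * s := by
  obtain ⟨s, h_lower, hst⟩ : ∃ s : ℚ, (∀ k : {k // 0 < a k}, b k / a k ≤ s) ∧ (s : ℝ) ≤ t := by
    rcases isEmpty_or_nonempty {k // 0 < a k} with h | h
    · obtain ⟨s, hs⟩ := exists_rat_lt t
      exact ⟨s, isEmptyElim, hs.le⟩
    · obtain ⟨k₀, hk₀⟩ := Finite.exists_max fun k : {k // 0 < a k} => b k / a k
      refine ⟨b k₀ / a k₀, hk₀, ?_⟩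
      have hpos : (0 : ℝ) < a k₀ := by exact_mod_cast k₀.2
      push_cast
      rw [div_le_iff₀' hpos]
      exact ht k₀
  refine ⟨s, hst, fun k => ?_⟩
  rcases lt_or_ge 0 (a k) with hk | hk
  · exact (div_le_iff₀' hk).1 (h_lower ⟨k, hk⟩)
  · have hk' : (a k : ℝ) ≤ 0 := by exact_mod_cast hk
    exact_mod_cast (ht k).trans (mul_le_mul_of_nonpos_left hst hk')

lemma sum_card_fiber_smul {κ α M : Type*} [Fintype κ] [Fintype α] [DecidableEq α]
    [AddCommMonoid M] (f : κ → α) (g : α → M) :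
    ∑ a, #{k | f k = a} • g a = ∑ k, g (f k) := by
  simp_rw [← sum_const, sum_fiberwise']

lemma one_le_sum_min_one {ι R : Type*} [Semiring R] [LinearOrder R] [IsOrderedRing R]
    {s : Finset ι} {w : ι → R} (hw : ∀ i ∈ s, 0 ≤ w i) (h : 1 ≤ ∑ i ∈ s, w i) :
    1 ≤ ∑ i ∈ s, min 1 (w i) := by
  by_cases hbig : ∃ i ∈ s, 1 ≤ w i
  · obtain ⟨i, hi, hwi⟩ := hbig
    calc (1 : R) = min 1 (w i) := (min_eq_left hwi).symm
      _ ≤ ∑ i ∈ s, min 1 (w i) :=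
        single_le_sum (fun j hj => le_min zero_le_one (hw j hj)) hi
  · push Not at hbig
    rwa [sum_congr rfl fun i hi => min_eq_right (hbig i hi).le]

lemma exists_common_denominator {ι : Type*} [Fintype ι] (μ : ι → ℚ) (hμ : ∀ i, 0 ≤ μ i) :
    ∃ q : ℕ, 0 < q ∧ ∃ n : ι → ℕ, ∀ i, (n i : ℚ) = q * μ i := by
  refine ⟨∏ i, (μ i).den, prod_pos fun i _ => (μ i).den_pos, ?_⟩
  have (i : ι) : ∃ n : ℕ, (n : ℚ) = (∏ i, (μ i).den : ℕ) * μ i := by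
    obtain ⟨m, hm⟩ := dvd_prod_of_mem (fun i => (μ i).den) (mem_univ i)
    refine ⟨(μ i).num.toNat * m, ?_⟩
    have hnum : ((μ i).num.toNat : ℚ) = (μ i).num := by
      exact_mod_cast Int.toNat_of_nonneg (Rat.num_nonneg.2 (hμ i))
    rw [hm]
    push_cast
    rw [hnum, ← Rat.mul_den_eq_num]
    ring
  choose n hn using this
  exact ⟨n, hn⟩

universe u

structure RatIneq (ι : Type*) where
  coeff : ι → ℚ
  bound : ℚ

namespace RatIneq

section Combinatorial

variable {ι : Type*}

def combine (a b : ℚ) (C D : RatIneq ι) : RatIneq ι :=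
  ⟨fun i => a * C.coeff i + b * D.coeff i, a * C.bound + b * D.bound⟩

def eliminate {σ : Type*} (L : σ → RatIneq ι) (v : ι) :
    {k // (L k).coeff v = 0} ⊕ {k // 0 < (L k).coeff v} × {k // (L k).coeff v < 0} →
      RatIneq ι
  | .inl k => L k
  | .inr (P, N) => combine (-(L N).coeff v) ((L P).coeff v) (L P) (L N)

variable {σ : Type*} (L : σ → RatIneq ι) (v : ι)

lemma coeff_eliminate_self (k) : (eliminate L v k).coeff v = 0 := by
  rcases k with k | ⟨P, N⟩
  · exact k.2
  · simp only [eliminate, combine]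
    ring

lemma coeff_eliminate_of_forall {i : ι} (h : ∀ k, (L k).coeff i = 0) (k) :
    (eliminate L v k).coeff i = 0 := by
  rcases k with k | ⟨P, N⟩
  · exact h k
  · simp [eliminate, combine, h]

end Combinatorial

variable {ι K : Type*} [Fintype ι] [Field K]

def eval (C : RatIneq ι) (x : ι → K) : K := ∑ i, (C.coeff i : K) * x i

def Holds [LE K] (C : RatIneq ι) (x : ι → K) : Prop := (C.bound : K) ≤ C.eval x

/-- The value of the `v`-th variable at which `C` becomes tight when the others are taken
from `x`. -/
def root (C : RatIneq ι) (v : ι) (x : ι → K) : K :=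
  x v + (C.bound - C.eval x) / C.coeff v

lemma eval_update [DecidableEq ι] (C : RatIneq ι) (x : ι → K) (v : ι) (a : K) :
    C.eval (update x v a) = C.eval x + C.coeff v * (a - x v) := by
  simp only [eval]
  rw [← sum_erase_add _ _ (mem_univ v), ← sum_erase_add _ _ (mem_univ v), update_self,
    sum_congr rfl fun i hi => by rw [update_of_ne (ne_of_mem_erase hi)]]
  ring

lemma eval_eq_coeff_mul (C : RatIneq ι) {i₀ : ι} (h : ∀ i ≠ i₀, C.coeff i = 0) (x : ι → K) :
    C.eval x = C.coeff i₀ * x i₀ :=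
  sum_eq_single i₀ (fun i _ hi => by simp [h i hi]) (by simp)

lemma holds_update_iff_of_eq_zero [LE K] [DecidableEq ι] {C : RatIneq ι} {v : ι} {x : ι → K}
    {a : K} (h : C.coeff v = 0) : C.Holds (update x v a) ↔ C.Holds x := by
  simp [Holds, eval_update, h]

variable [LinearOrder K] [IsStrictOrderedRing K]

lemma eval_combine (a b : ℚ) (C D : RatIneq ι) (x : ι → K) :
    (combine a b C D).eval x = a * C.eval x + b * D.eval x := by
  simp only [eval, combine, mul_sum, ← sum_add_distrib]
  refine sum_congr rfl fun i _ => ?_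
  push_cast
  ring

lemma Holds.combine {a b : ℚ} {C D : RatIneq ι} {x : ι → K} (ha : 0 ≤ a) (hb : 0 ≤ b)
    (hC : C.Holds x) (hD : D.Holds x) : (combine a b C D).Holds x := by
  have ha' : (0 : K) ≤ a := by exact_mod_cast ha
  have hb' : (0 : K) ≤ b := by exact_mod_cast hb
  rw [Holds, eval_combine]
  push_cast [RatIneq.combine]
  exact add_le_add (mul_le_mul_of_nonneg_left hC ha') (mul_le_mul_of_nonneg_left hD hb')

section Update

variable [DecidableEq ι] {C : RatIneq ι} {v : ι} {x : ι → K} {a : K}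

lemma holds_update_iff_of_pos (h : 0 < C.coeff v) :
    C.Holds (update x v a) ↔ C.root v x ≤ a := by
  have h' : (0 : K) < C.coeff v := by exact_mod_cast h
  rw [Holds, eval_update, root, ← sub_le_iff_le_add', ← le_sub_iff_add_le', div_le_iff₀' h']

lemma holds_update_iff_of_neg (h : C.coeff v < 0) :
    C.Holds (update x v a) ↔ a ≤ C.root v x := by
  have h' : (C.coeff v : K) < 0 := by exact_mod_cast h
  rw [Holds, eval_update, root, ← sub_le_iff_le_add', ← sub_le_iff_le_add', le_div_iff_of_neg' h']

end Update

lemma root_le_root {P N : RatIneq ι} {v : ι} {x : ι → K} (hP : 0 < P.coeff v)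
    (hN : N.coeff v < 0) (h : (combine (-N.coeff v) (P.coeff v) P N).Holds x) :
    P.root v x ≤ N.root v x := by
  have hP' : (0 : K) < P.coeff v := by exact_mod_cast hP
  have hN' : (N.coeff v : K) < 0 := by exact_mod_cast hN
  rw [Holds, eval_combine] at h
  push_cast [RatIneq.combine] at h
  rw [root, root, add_le_add_iff_left, ← neg_div_neg_eq (_ - _) (N.coeff v : K),
    div_le_div_iff₀ hP' (neg_pos.2 hN')]
  linarith

lemma holds_eliminate {σ : Type*} {L : σ → RatIneq ι} {x : ι → K} (h : ∀ k, (L k).Holds x)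
    (v : ι) : ∀ k, (eliminate L v k).Holds x
  | .inl k => h k
  | .inr (P, N) => (h P).combine (neg_nonneg.2 N.2.le) P.2.le (h N)

lemma exists_update_holds_of_eliminate [DecidableEq ι] {σ : Type*} [Finite σ]
    {L : σ → RatIneq ι} {v : ι} {x : ι → K} (h : ∀ k, (eliminate L v k).Holds x) :
    ∃ a, ∀ k, (L k).Holds (update x v a) := by
  obtain ⟨a, h_lower, h_upper⟩ := exists_forall_le_forall_ge
    (fun P : {k // 0 < (L k).coeff v} => (L P).root v x)
    (fun N : {k // (L k).coeff v < 0} => (L N).root v x)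
    fun P N => root_le_root P.2 N.2 (h (.inr (P, N)))
  refine ⟨a, fun k => ?_⟩
  rcases lt_trichotomy ((L k).coeff v) 0 with hk | hk | hk
  · exact (holds_update_iff_of_neg hk).2 (h_upper ⟨k, hk⟩)
  · exact (holds_update_iff_of_eq_zero hk).2 (h (.inl ⟨k, hk⟩))
  · exact (holds_update_iff_of_pos hk).2 (h_lower ⟨k, hk⟩)

theorem exists_rat_holds_le {σ : Type u} [Finite σ] (L : σ → RatIneq ι) {x : ι → ℝ}
    (hx : ∀ k, (L k).Holds x) (i₀ : ι) :
    ∃ y : ι → ℚ, (∀ k, (L k).Holds y) ∧ (y i₀ : ℝ) ≤ x i₀ := by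
  classical
  -- `s` holds the variables other than `i₀` that may still occur.
  suffices H : ∀ s : Finset ι, i₀ ∉ s → ∀ {τ : Type u} [Finite τ] (M : τ → RatIneq ι),
      (∀ k, ∀ i ∉ s, i ≠ i₀ → (M k).coeff i = 0) → (∀ k, (M k).Holds x) →
      ∃ y : ι → ℚ, (∀ k, (M k).Holds y) ∧ (y i₀ : ℝ) ≤ x i₀ from
    H (univ.erase i₀) (notMem_erase _ _) L
      (fun _ i hi hne => absurd (mem_erase.2 ⟨hne, mem_univ i⟩) hi) hx
  intro s
  induction s using Finset.induction_on with
  | empty =>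
    intro _ τ _ M hM hMx
    have h_eval {K : Type} [Field K] (k) (z : ι → K) : (M k).eval z = (M k).coeff i₀ * z i₀ :=
      eval_eq_coeff_mul _ (hM k · (notMem_empty _)) z
    obtain ⟨r, hr, hMr⟩ := exists_rat_le_of_forall_le_mul (fun k => (M k).coeff i₀)
      (fun k => (M k).bound) (t := x i₀) fun k => by simpa [Holds, h_eval] using hMx k
    exact ⟨fun _ => r, fun k => by simpa [Holds, h_eval] using hMr k, hr⟩
  | insert v s hv ih =>
    intro hi₀ τ _ M hM hMx
    have hv₀ : v ≠ i₀ := fun h => hi₀ (h ▸ mem_insert_self v s)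
    have h_support : ∀ k, ∀ i ∉ s, i ≠ i₀ → (eliminate M v k).coeff i = 0 := by
      intro k i hi hne
      by_cases hiv : i = v
      · exact hiv ▸ coeff_eliminate_self M v k
      · exact coeff_eliminate_of_forall M v (fun k => hM k i (by simp [hiv, hi]) hne) k
    obtain ⟨y, hy, hy₀⟩ := ih (fun h => hi₀ (mem_insert_of_mem h)) (eliminate M v) h_support
      (holds_eliminate hMx v)
    obtain ⟨a, ha⟩ := exists_update_holds_of_eliminate hy
    exact ⟨update y v a, ha, by rwa [update_of_ne hv₀.symm]⟩

end RatIneq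

section

variable {V : Type*} [Fintype V] [DecidableEq V] {G : SimpleGraph V} {p q : ℕ}

def IsFractionalColoring (G : SimpleGraph V) (c : ℝ) (lam : Finset V → ℝ) : Prop :=
  (∀ I : Finset V, IsIndepSet G (I : Set V) → 0 ≤ lam I ∧ lam I ≤ 1) ∧
  (∀ I : Finset V, ¬ IsIndepSet G (I : Set V) → lam I = 0) ∧
  (∑ I : Finset V, lam I) ≤ c ∧
  (∀ v : V, 1 ≤ ∑ I : Finset V, if v ∈ I then lam I else 0)

lemma hasPQColoring_iff_exists_indep_cover :
    HasPQColoring G p q ↔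
      ∃ f : Fin p → Finset V, (∀ i, IsIndepSet G (f i : Set V)) ∧ ∀ v, q ≤ #{i | v ∈ f i} := by
  constructor
  · rintro ⟨X, hX, hdisj⟩
    refine ⟨fun i => {v | i ∈ X v}, fun i u hu w hw hadj => ?_, fun v => ?_⟩
    · simp only [coe_filter, mem_univ, true_and, Set.mem_ofPred_eq] at hu hw
      exact disjoint_left.1 (hdisj hadj) hu hw
    · simpa [filter_mem_eq_inter] using hX v
  · rintro ⟨f, hf, hcover⟩
    refine ⟨fun v => {i | v ∈ f i}, hcover, fun u w hadj => disjoint_left.2 fun i hu hw => ?_⟩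
    simp only [mem_filter, mem_univ, true_and] at hu hw
    exact hf i u hu w hw hadj

lemma hasPQColoring_card_of_indep_cover {κ : Type*} [Fintype κ] (f : κ → Finset V)
    (hf : ∀ k, IsIndepSet G (f k : Set V)) (hcover : ∀ v, q ≤ #{k | v ∈ f k}) :
    HasPQColoring G (Fintype.card κ) q := by
  classical
  let e := Fintype.equivFin κ
  refine hasPQColoring_iff_exists_indep_cover.2 ⟨f ∘ e.symm, fun i => hf _, fun v => ?_⟩
  exact (card_equiv e.symm (by simp) : #{i | v ∈ f (e.symm i)} = #{k | v ∈ f k}) ▸ hcover v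

lemma hasPQColoring_sum_of_multiplicity (n : Finset V → ℕ)
    (hn : ∀ I : Finset V, ¬ IsIndepSet G (I : Set V) → n I = 0)
    (hcover : ∀ v, q ≤ ∑ I, if v ∈ I then n I else 0) : HasPQColoring G (∑ I, n I) q := by
  have hcard : Fintype.card (Σ I, Fin (n I)) = ∑ I, n I := by simp
  refine hcard ▸ hasPQColoring_card_of_indep_cover (Sigma.fst : (Σ I, Fin (n I)) → _)
    (fun k => ?_) fun v => ?_
  · by_contra hk
    exact (hn k.1 hk ▸ k.2).elim0
  · convert hcover v using 1
    rw [card_filter, Fintype.sum_sigma]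
    simp [apply_ite]

theorem HasPQColoring.exists_isFractionalColoring {c : ℝ} (h : HasPQColoring G p q)
    (hq : 0 < q) (hpc : (p : ℝ) ≤ c * q) : ∃ lam, IsFractionalColoring G c lam := by
  obtain ⟨f, hf, hcover⟩ := hasPQColoring_iff_exists_indep_cover.1 h
  have hq' : (0 : ℝ) < q := by exact_mod_cast hq
  set w : Finset V → ℝ := fun I => #{i | f i = I} • (q : ℝ)⁻¹
  have hw_nonneg (I : Finset V) : 0 ≤ w I := by positivity
  refine ⟨fun I => min 1 (w I), fun I _ => ⟨le_min zero_le_one (hw_nonneg I), min_le_left _ _⟩,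
    fun I hI => ?_, ?_, fun v => ?_⟩
  · have : #{i | f i = I} = 0 :=
      card_eq_zero.2 <| filter_eq_empty_iff.2 fun i _ hi => hI (hi ▸ hf i)
    simp [w, this]
  · calc ∑ I, min 1 (w I) ≤ ∑ I, w I := sum_le_sum fun I _ => min_le_right _ _
      _ = p * (q : ℝ)⁻¹ := by
          rw [sum_card_fiber_smul f fun _ => (q : ℝ)⁻¹, sum_const, card_univ, Fintype.card_fin,
            nsmul_eq_mul]
      _ ≤ c := by rwa [← div_eq_mul_inv, div_le_iff₀ hq']
  · rw [← sum_filter]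
    refine one_le_sum_min_one (fun I _ => hw_nonneg I) ?_
    calc (1 : ℝ) ≤ #{i | v ∈ f i} * (q : ℝ)⁻¹ := by
          rw [← div_eq_mul_inv, le_div_iff₀ hq', one_mul]
          exact_mod_cast hcover v
      _ = ∑ i, if v ∈ f i then (q : ℝ)⁻¹ else 0 := by
          rw [← sum_filter, sum_const, nsmul_eq_mul]
      _ = ∑ I, #{i | f i = I} • if v ∈ I then (q : ℝ)⁻¹ else 0 :=
          (sum_card_fiber_smul f fun I => if v ∈ I then (q : ℝ)⁻¹ else 0).symm
      _ = ∑ I with v ∈ I, w I := by simp only [sum_filter, smul_ite, smul_zero, w]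

lemma exists_hasPQColoring_of_rat_weights [Nonempty V] (μ : Finset V → ℚ)
    (h_nonneg : ∀ I, 0 ≤ μ I) (h_indep : ∀ I : Finset V, ¬ IsIndepSet G (I : Set V) → μ I ≤ 0)
    (hcover : ∀ v, 1 ≤ ∑ I, if v ∈ I then μ I else 0) :
    ∃ p q : ℕ, 1 ≤ q ∧ q ≤ p ∧ HasPQColoring G p q ∧ (p : ℚ) = q * ∑ I, μ I := by
  obtain ⟨q, hq, n, hn⟩ := exists_common_denominator μ h_nonneg
  have hq' : (0 : ℚ) < q := by exact_mod_cast hq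
  have hn_cover (v : V) : q ≤ ∑ I, if v ∈ I then n I else 0 := by
    have : (q : ℚ) ≤ ∑ I, if v ∈ I then (n I : ℚ) else 0 :=
      calc (q : ℚ) = q * 1 := (mul_one _).symm
        _ ≤ q * ∑ I, if v ∈ I then μ I else 0 := by gcongr; exact hcover v
        _ = ∑ I, if v ∈ I then (n I : ℚ) else 0 := by simp [hn, mul_sum, mul_ite]
    exact_mod_cast this
  refine ⟨∑ I, n I, q, hq, ?_, hasPQColoring_sum_of_multiplicity n (fun I hI => ?_) hn_cover, ?_⟩
  · obtain ⟨v⟩ := ‹Nonempty V›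
    exact (hn_cover v).trans (sum_le_sum fun I _ => by split_ifs <;> simp)
  · have : (n I : ℚ) = 0 := by rw [hn, le_antisymm (h_indep I hI) (h_nonneg I), mul_zero]
    exact_mod_cast this
  · push_cast
    simp [hn, mul_sum]

open Classical in
/-- Variable `some I` is the weight of `I`, and `none` bounds the total weight. -/
noncomputable def fracColoringIneq (G : SimpleGraph V) :
    Finset V ⊕ Finset V ⊕ V ⊕ Unit → RatIneq (Option (Finset V))
  | .inl I => ⟨fun j => if j = some I then 1 else 0, 0⟩
  | .inr (.inl I) =>
    ⟨fun j => if j = some I then if IsIndepSet G (I : Set V) then 0 else -1 else 0, 0⟩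
  | .inr (.inr (.inl v)) => ⟨fun j => j.elim 0 fun I => if v ∈ I then 1 else 0, 1⟩
  | .inr (.inr (.inr ())) => ⟨fun j => j.elim 1 fun _ => -1, 0⟩

lemma fracColoringIneq_holds_iff {K : Type*} [Field K] [LinearOrder K] [IsStrictOrderedRing K]
    (x : Option (Finset V) → K) :
    (∀ k, (fracColoringIneq G k).Holds x) ↔
      (∀ I, 0 ≤ x (some I)) ∧ (∀ I : Finset V, ¬ IsIndepSet G (I : Set V) → x (some I) ≤ 0) ∧
      (∀ v, 1 ≤ ∑ I, if v ∈ I then x (some I) else 0) ∧ ∑ I, x (some I) ≤ x none := by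
  simp [Sum.forall, RatIneq.Holds, RatIneq.eval, fracColoringIneq, Fintype.sum_option,
    apply_ite, ite_mul]

theorem IsFractionalColoring.exists_hasPQColoring [Nonempty V] {c : ℝ} {lam : Finset V → ℝ}
    (h : IsFractionalColoring G c lam) :
    ∃ p q : ℕ, 1 ≤ q ∧ q ≤ p ∧ HasPQColoring G p q ∧ (p : ℝ) ≤ c * q := by
  obtain ⟨h_bound, h_zero, h_total, h_cover⟩ := h
  have h_nonneg (I : Finset V) : 0 ≤ lam I := by
    by_cases hI : IsIndepSet G (I : Set V)
    exacts [(h_bound I hI).1, (h_zero I hI).ge]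
  obtain ⟨y, hy, hy_total⟩ := RatIneq.exists_rat_holds_le (fracColoringIneq G)
    ((fracColoringIneq_holds_iff fun j => j.elim c lam).2
      ⟨h_nonneg, fun I hI => (h_zero I hI).le, h_cover, h_total⟩) none
  obtain ⟨hy_nonneg, hy_indep, hy_cover, hy_sum⟩ := (fracColoringIneq_holds_iff y).1 hy
  obtain ⟨p, q, hq, hqp, hcol, hp⟩ :=
    exists_hasPQColoring_of_rat_weights (fun I => y (some I)) hy_nonneg hy_indep hy_cover
  refine ⟨p, q, hq, hqp, hcol, ?_⟩
  calc (p : ℝ) = q * ∑ I, (y (some I) : ℝ) := by exact_mod_cast hp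
    _ ≤ q * c := by
      gcongr
      exact le_trans (by exact_mod_cast hy_sum) hy_total
    _ = c * q := mul_comm _ _

end

theorem fractional_coloring_iff_pq_coloring_general {V : Type*} [Fintype V] [DecidableEq V]
    [Nonempty V] (G : SimpleGraph V) (c : ℝ) :
    (∃ lam : Finset V → ℝ,
        (∀ I : Finset V, IsIndepSet G (I : Set V) → 0 ≤ lam I ∧ lam I ≤ 1) ∧
        (∀ I : Finset V, ¬ IsIndepSet G (I : Set V) → lam I = 0) ∧
        (∑ I : Finset V, lam I) ≤ c ∧
        (∀ v : V, 1 ≤ ∑ I : Finset V, if v ∈ I then lam I else 0)) ↔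
    (∃ p q : ℕ, 1 ≤ q ∧ q ≤ p ∧ HasPQColoring G p q ∧ (p : ℝ) ≤ c * (q : ℝ)) :=
  ⟨fun ⟨_, h⟩ => IsFractionalColoring.exists_hasPQColoring h,
    fun ⟨_, _, hq, _, hcol, hpc⟩ => hcol.exists_isFractionalColoring hq hpc⟩

/-- for a finite graph `G` with at least one vertex and a real `c ≥ 1`,
the following are equivalent: (1) there is an assignment of weights `λ_I ∈ [0,1]` to
the independent sets `I` of `G` of total weight at most `c` such that for every
vertex `v` the total weight of the independent sets containing `v` is at least `1`;
(2) there are integers `p ≥ q ≥ 1` such that `G` admits a `(p:q)`-coloring with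
`p ≤ c·q`. -/
theorem fractional_coloring_iff_pq_coloring {V : Type*} [Fintype V] [DecidableEq V]
    [Nonempty V] (G : SimpleGraph V) (c : ℝ) (hc : 1 ≤ c) :
    (∃ lam : Finset V → ℝ,
        (∀ I : Finset V, IsIndepSet G (I : Set V) → 0 ≤ lam I ∧ lam I ≤ 1) ∧
        (∀ I : Finset V, ¬ IsIndepSet G (I : Set V) → lam I = 0) ∧
        (∑ I : Finset V, lam I) ≤ c ∧
        (∀ v : V, 1 ≤ ∑ I : Finset V, if v ∈ I then lam I else 0)) ↔
    (∃ p q : ℕ, 1 ≤ q ∧ q ≤ p ∧ HasPQColoring G p q ∧ (p : ℝ) ≤ c * (q : ℝ)) :=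
  fractional_coloring_iff_pq_coloring_general G c
end

section
/- Let R be a nonempty finite set, let M ≥ 2 be a real number, let ℐ be a finite index set with |ℐ| ≤ M, let 0 < f ≤ 1, and for each i ∈ ℐ let Bad_i ⊆ R be a subset with |Bad_i| ≤ f·|R|. Then for every integer k > 3·ln(M)/f there exists a function s : {1,…,k} → R such that for every i ∈ ℐ, the number of indices j ∈ {1,…,k} with s(j) ∈ Bad_i is at most 2·f·k. -/
/-- let `R` be a nonempty finite set, `M ≥ 2` real, `ι` a finite index
set of size at most `M`, `0 < f ≤ 1`, and for each `i` let `Bad i ⊆ R` have size at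
most `f·|R|`. Then for every integer `k > 3·ln M/f` there is `s : {1,…,k} → R` such
that for every `i`, the number of indices `j` with `s j ∈ Bad i` is at most `2·f·k`. -/
theorem exists_good_sample {α : Type*} [DecidableEq α] (R : Finset α) (hR : R.Nonempty)
    (M : ℝ) (hM : 2 ≤ M) {ι : Type*} [Fintype ι] (hι : (Fintype.card ι : ℝ) ≤ M)
    (f : ℝ) (hf0 : 0 < f) (hf1 : f ≤ 1)
    (Bad : ι → Finset α) (hBadsub : ∀ i, Bad i ⊆ R)
    (hBadcard : ∀ i, ((Bad i).card : ℝ) ≤ f * (R.card : ℝ))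
    (k : ℕ) (hk : 3 * Real.log M / f < (k : ℝ)) :
    ∃ s : Fin k → α, (∀ j, s j ∈ R) ∧
      ∀ i, (((Finset.univ.filter fun j : Fin k => s j ∈ Bad i).card : ℝ)) ≤ 2 * f * k := by
  classical
  have hR1 : (1:ℝ) ≤ (R.card : ℝ) := by exact_mod_cast Nat.one_le_iff_ne_zero.mpr (Finset.card_ne_zero_of_mem hR.choose_spec)
  have hRpos : (0:ℝ) < (R.card : ℝ) := by linarith
  have hlogM : (0:ℝ) < Real.log M := Real.log_pos (by linarith)
  have hkpos : (0:ℝ) < (k:ℝ) := lt_of_le_of_lt (le_of_lt (by positivity)) hk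
  set X : ι → (Fin k → α) → ℕ := fun i s => (Finset.univ.filter fun j : Fin k => s j ∈ Bad i).card with hX
  set S : Finset (Fin k → α) := Fintype.piFinset (fun _ => R) with hSdef
  have hScard : (S.card : ℝ) = (R.card : ℝ)^k := by
    simp [hSdef, Fintype.card_piFinset, Finset.prod_const]
  set B : ι → Finset (Fin k → α) := fun i => S.filter (fun s => 2*f*(k:ℝ) < (X i s : ℝ)) with hB
  have hrp : (0:ℝ) < (2:ℝ) ^ (2*f*(k:ℝ)) := Real.rpow_pos_of_pos two_pos _
  have key : ∀ i, ((B i).card : ℝ) * (2:ℝ)^(2*f*(k:ℝ)) ≤ ((1+f) * (R.card:ℝ))^k := by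
    intro i
    have h1 : ((B i).card : ℝ) * (2:ℝ)^(2*f*(k:ℝ)) ≤ ∑ s ∈ S, (2:ℝ)^(X i s) := by
      calc ((B i).card : ℝ) * (2:ℝ)^(2*f*(k:ℝ)) = ∑ _s ∈ B i, (2:ℝ)^(2*f*(k:ℝ)) := by
            rw [Finset.sum_const, nsmul_eq_mul]
        _ ≤ ∑ s ∈ B i, (2:ℝ)^(X i s) := by
            apply Finset.sum_le_sum
            intro s hs
            have hs' := (Finset.mem_filter.mp hs).2
            have : (2:ℝ)^(2*f*(k:ℝ)) ≤ (2:ℝ)^((X i s : ℝ)) :=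
              Real.rpow_le_rpow_of_exponent_le one_le_two (le_of_lt hs')
            rwa [Real.rpow_natCast] at this
        _ ≤ ∑ s ∈ S, (2:ℝ)^(X i s) := by
            apply Finset.sum_le_sum_of_subset_of_nonneg (Finset.filter_subset _ _)
            intro s _ _; positivity
    have h2 : ∑ s ∈ S, (2:ℝ)^(X i s) = (∑ r ∈ R, if r ∈ Bad i then (2:ℝ) else 1)^k := by
      have hpt : ∀ s ∈ S, (2:ℝ)^(X i s) = ∏ j : Fin k, (if s j ∈ Bad i then (2:ℝ) else 1) := by
        intro s _
        rw [Finset.prod_ite, Finset.prod_const, Finset.prod_const, one_pow, mul_one]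
      rw [Finset.sum_congr rfl hpt, hSdef,
        Finset.sum_prod_piFinset R (fun (_ : Fin k) (a : α) => if a ∈ Bad i then (2:ℝ) else 1),
        Finset.prod_const, Finset.card_univ, Fintype.card_fin]
    have h3 : (∑ r ∈ R, if r ∈ Bad i then (2:ℝ) else 1) = (R.card : ℝ) + ((Bad i).card : ℝ) := by
      have : ∀ r ∈ R, (if r ∈ Bad i then (2:ℝ) else 1) = 1 + (if r ∈ Bad i then (1:ℝ) else 0) := by
        intro r _; split <;> norm_num
      rw [Finset.sum_congr rfl this, Finset.sum_add_distrib, Finset.sum_const, Finset.sum_boole,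
        nsmul_eq_mul, mul_one, Finset.filter_mem_eq_inter, Finset.inter_eq_right.mpr (hBadsub i)]
    have h4 : (∑ r ∈ R, if r ∈ Bad i then (2:ℝ) else 1) ≤ (1+f) * (R.card:ℝ) := by
      rw [h3]; nlinarith [hBadcard i]
    calc ((B i).card : ℝ) * (2:ℝ)^(2*f*(k:ℝ)) ≤ (∑ r ∈ R, if r ∈ Bad i then (2:ℝ) else 1)^k :=
          h1.trans_eq h2
      _ ≤ ((1+f) * (R.card:ℝ))^k := by
          apply pow_le_pow_left₀ _ h4
          rw [h3]; positivity
  -- main numeric inequality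
  have hexp : M * (1+f)^k < (2:ℝ)^(2*f*(k:ℝ)) := by
    have h1 : Real.log (1+f) ≤ f := by
      have := Real.log_le_sub_one_of_pos (by linarith : (0:ℝ) < 1+f); linarith
    have hlog2 : (2:ℝ)/3 ≤ Real.log 2 := by
      have := Real.log_two_gt_d9; linarith
    have hfk : 3 * Real.log M < f * (k:ℝ) := by
      rw [div_lt_iff₀ hf0] at hk; linarith [mul_comm f (k:ℝ)]
    have hlog : Real.log M + (k:ℝ) * Real.log (1+f) < (2*f*(k:ℝ)) * Real.log 2 := by
      nlinarith [mul_le_mul_of_nonneg_left h1 (le_of_lt hkpos), mul_le_mul_of_nonneg_left hlog2 (mul_pos hf0 hkpos).le]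
    have hL : (0:ℝ) < M * (1+f)^k := by positivity
    rw [← Real.log_lt_log_iff hL hrp, Real.log_mul (by linarith) (by positivity),
      Real.log_pow, Real.log_rpow two_pos]
    push_cast
    linarith
  -- sum over i
  have hsum : (∑ i : ι, ((B i).card:ℝ)) < (S.card : ℝ) := by
    rw [hScard]
    have bnd : ∀ i : ι, ((B i).card:ℝ) ≤ ((1+f) * (R.card:ℝ))^k / (2:ℝ)^(2*f*(k:ℝ)) := by
      intro i
      rw [le_div_iff₀ hrp]; exact key i
    calc (∑ i : ι, ((B i).card:ℝ)) ≤ ∑ _i : ι, ((1+f) * (R.card:ℝ))^k / (2:ℝ)^(2*f*(k:ℝ)) :=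
          Finset.sum_le_sum fun i _ => bnd i
      _ = (Fintype.card ι : ℝ) * (((1+f) * (R.card:ℝ))^k / (2:ℝ)^(2*f*(k:ℝ))) := by
          rw [Finset.sum_const, nsmul_eq_mul, Finset.card_univ]
      _ ≤ M * (((1+f) * (R.card:ℝ))^k / (2:ℝ)^(2*f*(k:ℝ))) := by
          apply mul_le_mul_of_nonneg_right hι; positivity
      _ < (R.card:ℝ)^k := by
          rw [mul_div_assoc', div_lt_iff₀ hrp, mul_pow]
          calc M * ((1+f)^k * (R.card:ℝ)^k) = (M * (1+f)^k) * (R.card:ℝ)^k := by ring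
            _ < (2:ℝ)^(2*f*(k:ℝ)) * (R.card:ℝ)^k := by
                apply mul_lt_mul_of_pos_right hexp; positivity
            _ = (R.card:ℝ)^k * (2:ℝ)^(2*f*(k:ℝ)) := mul_comm _ _
  -- extract a good sample
  have hT : (S.filter (fun s => ∀ i, (X i s : ℝ) ≤ 2*f*(k:ℝ))).Nonempty := by
    by_contra hne
    rw [Finset.not_nonempty_iff_eq_empty] at hne
    have hsub : S ⊆ Finset.univ.biUnion B := by
      intro s hs
      by_cases hall : ∀ i, (X i s : ℝ) ≤ 2*f*(k:ℝ)
      · exact absurd (hne ▸ Finset.mem_filter.mpr ⟨hs, hall⟩) (Finset.notMem_empty s)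
      · push_neg at hall
        obtain ⟨i, hi⟩ := hall
        exact Finset.mem_biUnion.mpr ⟨i, Finset.mem_univ i, Finset.mem_filter.mpr ⟨hs, hi⟩⟩
    have hcard : (S.card : ℝ) ≤ ∑ i : ι, ((B i).card : ℝ) := by
      exact_mod_cast (Finset.card_le_card hsub).trans Finset.card_biUnion_le
    linarith
  obtain ⟨s, hs⟩ := hT
  rw [Finset.mem_filter] at hs
  refine ⟨s, fun j => ?_, hs.2⟩
  have := hs.1
  rw [hSdef, Fintype.mem_piFinset] at this
  exact this j
end

section
/- Let G be a simple graph and let Δ ≥ 1 and q ≥ 1 be integers. Suppose there exist q partial proper colorings c_1, …, c_q of G, where each c_i assigns to some subset of the vertices a color from {1,…,Δ} such that any two adjacent vertices that are both colored by c_i receive distinct colors, and suppose every vertex of G is left uncolored by at most one of c_1, …, c_q. Then G admits a (qΔ : q−1)-coloring. -/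
/-!
Give each vertex `v` the colors `(i, cᵢ(v))` for the colorings `cᵢ` that color `v`, a set
of at least `q - 1` colors out of `q × Δ`. Adjacent vertices get disjoint sets, because a
shared color `(i, a)` would mean `cᵢ` colors both endpoints `a`.
-/

open Finset

section PartialColorings

variable {V ι α : Type*} [Fintype ι] [Fintype α] [DecidableEq α]

def coloredPairs (col : ι → V → Option α) (v : V) : Finset (ι × α) :=
  {p | col p.1 v = some p.2}

theorem card_coloredPairs_add_card_uncolored (col : ι → V → Option α) (v : V) :
    #(coloredPairs col v) + #{i | col i v = none} = Fintype.card ι := by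
  have hfiber : ∀ i, #{a | col i v = some a} = if col i v = none then 0 else 1 := by
    intro i
    cases col i v <;> simp [Finset.filter_eq]
  rw [coloredPairs, card_filter, Fintype.sum_prod_type, card_filter, ← card_univ,
    card_eq_sum_ones, ← sum_add_distrib]
  refine sum_congr rfl fun i _ => ?_
  simp only [← card_filter, hfiber]
  split_ifs <;> rfl

theorem disjoint_coloredPairs {col : ι → V → Option α} {u v : V}
    (h : ∀ i a, col i u = some a → col i v ≠ some a) :
    Disjoint (coloredPairs col u) (coloredPairs col v) := by
  simp only [coloredPairs, disjoint_left, mem_filter, mem_univ, true_and]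
  exact fun p hu hv => h p.1 p.2 hu hv

end PartialColorings

theorem pq_coloring_of_partial_colorings_general {V : Type*} (G : SimpleGraph V)
    (Δ q : ℕ)
    (col : Fin q → V → Option (Fin Δ))
    (hproper : ∀ (i : Fin q) (u v : V) (a b : Fin Δ),
      G.Adj u v → col i u = some a → col i v = some b → a ≠ b)
    (hmiss : ∀ v : V, (Finset.univ.filter fun i : Fin q => col i v = none).card ≤ 1) :
    HasPQColoring G (q * Δ) (q - 1) := by
  refine ⟨fun v => (coloredPairs col v).map finProdFinEquiv.toEmbedding, fun v => ?_,
    fun u v huv => ?_⟩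
  · have hcard := card_coloredPairs_add_card_uncolored col v
    rw [Fintype.card_fin] at hcard
    rw [card_map]
    have := hmiss v
    omega
  · rw [disjoint_map]
    exact disjoint_coloredPairs fun i a hu hv => hproper i u v a a huv hu hv rfl

/-- given `q` partial proper colorings of `G` with colors from
`{1,…,Δ}` (modelled as `V → Option (Fin Δ)`, `none` meaning uncolored), such that
every vertex is left uncolored by at most one of them, `G` admits a
`(qΔ : q−1)`-coloring. -/
theorem pq_coloring_of_partial_colorings {V : Type*} (G : SimpleGraph V)
    (Δ q : ℕ) (hΔ : 1 ≤ Δ) (hq : 1 ≤ q)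
    (col : Fin q → V → Option (Fin Δ))
    (hproper : ∀ (i : Fin q) (u v : V) (a b : Fin Δ),
      G.Adj u v → col i u = some a → col i v = some b → a ≠ b)
    (hmiss : ∀ v : V, (Finset.univ.filter fun i : Fin q => col i v = none).card ≤ 1) :
    HasPQColoring G (q * Δ) (q - 1) :=
  pq_coloring_of_partial_colorings_general G Δ q col hproper hmiss
end
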